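/- Let Δ > 0, let a be a real number, and let f be a continuously differentiable complex-valued function on the closed interval [a, a+Δ]. Then for every u ∈ [a, a+Δ], |f(u)|² ≤ Δ^{−1} ∫_a^{a+Δ} |f(x)|² dx + 2 · (∫_a^{a+Δ} |f(x)|² dx)^{1/2} · (∫_a^{a+Δ} |f′(x)|² dx)^{1/2}. -/

import Mathlib

/-! With `g = ‖f‖²`, the fundamental theorem of calculus gives `g u ≤ g t + ∫ₐᵇ |g'|` for all
`t, u ∈ [a, b]`; averaging over `t` yields `g u ≤ (b - a)⁻¹ ∫ₐᵇ g + ∫ₐᵇ |g'|`. Since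
`g' = 2⟪f, f'⟫`, we have `|g'| ≤ 2 ‖f‖ ‖f'‖`, and Cauchy–Schwarz bounds `∫ₐᵇ ‖f‖ ‖f'‖`. -/

open MeasureTheory Set Filter
open scoped ENNReal

theorem ContinuousOn.memLp_restrict_of_isCompact {X E : Type*} [TopologicalSpace X]
    [MeasurableSpace X] [OpensMeasurableSpace X] {μ : Measure X} [IsFiniteMeasureOnCompacts μ]
    [NormedAddCommGroup E] {f : X → E} {s : Set X} (hf : ContinuousOn f s) (hs : IsCompact s)
    (hms : MeasurableSet s) (p : ℝ≥0∞) : MemLp f p (μ.restrict s) := by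
  have : IsFiniteMeasure (μ.restrict s) := isFiniteMeasure_restrict.2 hs.measure_lt_top.ne
  obtain ⟨C, hC⟩ := hs.exists_bound_of_continuousOn hf
  exact .of_bound (hf.aestronglyMeasurable_of_isCompact hs hms) C
    ((ae_restrict_iff' hms).2 (Eventually.of_forall hC))

section Interval

variable {a b : ℝ}

theorem integral_norm_mul_norm_le_sqrt_mul_sqrt {E : Type*} [NormedAddCommGroup E]
    {f g : ℝ → E} (hab : a ≤ b) (hf : ContinuousOn f (Icc a b)) (hg : ContinuousOn g (Icc a b)) :
    ∫ x in a..b, ‖f x‖ * ‖g x‖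
      ≤ √(∫ x in a..b, ‖f x‖ ^ 2) * √(∫ x in a..b, ‖g x‖ ^ 2) := by
  simp only [intervalIntegral.integral_of_le hab, ← integral_Icc_eq_integral_Ioc,
    Real.sqrt_eq_rpow, ← Real.rpow_two]
  simpa only [one_div] using integral_mul_norm_le_Lp_mul_Lq Real.HolderConjugate.two_two
    (hf.memLp_restrict_of_isCompact isCompact_Icc measurableSet_Icc _)
    (hg.memLp_restrict_of_isCompact isCompact_Icc measurableSet_Icc _)

section Deriv

variable {g g' : ℝ → ℝ}

theorem abs_sub_le_integral_abs_of_hasDerivWithinAt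
    (hderiv : ∀ x ∈ Icc a b, HasDerivWithinAt g (g' x) (Icc a b) x)
    (hg' : ContinuousOn g' (Icc a b)) {t u : ℝ} (ht : t ∈ Icc a b) (hu : u ∈ Icc a b) :
    |g u - g t| ≤ ∫ x in a..b, |g' x| := by
  have hab : a ≤ b := ht.1.trans ht.2
  have hsub : uIcc t u ⊆ Icc a b := uIcc_subset_Icc ht hu
  have hftc : ∫ x in t..u, g' x = g u - g t := by
    refine intervalIntegral.integral_eq_sub_of_hasDeriv_right
      (HasDerivWithinAt.continuousOn fun x hx ↦ (hderiv x (hsub hx)).mono hsub)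
      (fun x hx ↦ ?_) ((hg'.mono hsub).intervalIntegrable)
    have hx' : x ∈ Ioo a b :=
      ⟨(le_min ht.1 hu.1).trans_lt hx.1, hx.2.trans_le (max_le ht.2 hu.2)⟩
    exact ((hderiv x (Ioo_subset_Icc_self hx')).hasDerivAt
      (Icc_mem_nhds hx'.1 hx'.2)).hasDerivWithinAt
  calc |g u - g t| = |∫ x in t..u, g' x| := by rw [hftc]
    _ ≤ |(∫ x in t..u, |g' x|)| :=
      intervalIntegral.norm_integral_le_abs_integral_norm (f := g')
    _ ≤ |(∫ x in a..b, |g' x|)| := by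
      refine intervalIntegral.abs_integral_mono_interval ?_
        (Eventually.of_forall fun x ↦ abs_nonneg (g' x)) (hg'.intervalIntegrable_of_Icc hab).abs
      exact uIoc_subset_uIoc_of_uIcc_subset_uIcc (by rwa [uIcc_of_le hab])
    _ = ∫ x in a..b, |g' x| :=
      abs_of_nonneg (intervalIntegral.integral_nonneg hab fun x _ ↦ abs_nonneg _)

theorem le_inv_mul_integral_add_integral_abs_deriv (hab : a < b)
    (hderiv : ∀ x ∈ Icc a b, HasDerivWithinAt g (g' x) (Icc a b) x)
    (hg' : ContinuousOn g' (Icc a b)) {u : ℝ} (hu : u ∈ Icc a b) :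
    g u ≤ (b - a)⁻¹ * (∫ x in a..b, g x) + ∫ x in a..b, |g' x| := by
  set C := ∫ x in a..b, |g' x|
  have hg : IntervalIntegrable g volume a b :=
    (HasDerivWithinAt.continuousOn hderiv).intervalIntegrable_of_Icc hab.le
  have hpointwise : ∀ t ∈ Icc a b, g u ≤ g t + C := fun t ht ↦ by
    linarith [le_abs_self (g u - g t), abs_sub_le_integral_abs_of_hasDerivWithinAt hderiv hg' ht hu]
  have hint : (b - a) * g u ≤ (∫ x in a..b, g x) + (b - a) * C := by
    simpa [intervalIntegral.integral_add hg intervalIntegrable_const] using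
      intervalIntegral.integral_mono_on hab.le intervalIntegrable_const
        (hg.add intervalIntegrable_const) hpointwise
  rw [inv_mul_eq_div, ← sub_le_iff_le_add, le_div_iff₀ (sub_pos.2 hab)]
  linarith

end Deriv

theorem sq_norm_le_inv_mul_integral_add_two_mul_integral {E : Type*} [NormedAddCommGroup E]
    [InnerProductSpace ℝ E] {f f' : ℝ → E} (hab : a < b)
    (hderiv : ∀ x ∈ Icc a b, HasDerivWithinAt f (f' x) (Icc a b) x)
    (hf' : ContinuousOn f' (Icc a b)) {u : ℝ} (hu : u ∈ Icc a b) :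
    ‖f u‖ ^ 2 ≤ (b - a)⁻¹ * (∫ x in a..b, ‖f x‖ ^ 2) + 2 * ∫ x in a..b, ‖f x‖ * ‖f' x‖ := by
  have hf : ContinuousOn f (Icc a b) := HasDerivWithinAt.continuousOn hderiv
  have hdot : ContinuousOn (fun x ↦ 2 * inner ℝ (f x) (f' x)) (Icc a b) :=
    continuousOn_const.mul (hf.inner hf')
  calc ‖f u‖ ^ 2
      ≤ (b - a)⁻¹ * (∫ x in a..b, ‖f x‖ ^ 2) + ∫ x in a..b, |2 * inner ℝ (f x) (f' x)| :=
        le_inv_mul_integral_add_integral_abs_deriv hab (fun x hx ↦ (hderiv x hx).norm_sq) hdot hu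
    _ ≤ (b - a)⁻¹ * (∫ x in a..b, ‖f x‖ ^ 2) + ∫ x in a..b, 2 * (‖f x‖ * ‖f' x‖) := by
      gcongr
      refine intervalIntegral.integral_mono_on hab.le (hdot.intervalIntegrable_of_Icc hab.le).abs
        ((continuousOn_const.mul (hf.norm.mul hf'.norm)).intervalIntegrable_of_Icc hab.le)
        fun x _ ↦ ?_
      rw [abs_mul, abs_two]
      gcongr
      exact abs_real_inner_le_norm _ _
    _ = _ := by rw [intervalIntegral.integral_const_mul]

end Interval

/-- **Sobolev's inequality** (the basic inequality of the classical large sieve):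
if `f` is continuously differentiable on `[a, a+Δ]` with derivative `f'`, then for every
`u ∈ [a, a+Δ]`,
`‖f u‖² ≤ Δ⁻¹ ∫_a^{a+Δ} ‖f‖² + 2 (∫_a^{a+Δ} ‖f‖²)^{1/2} (∫_a^{a+Δ} ‖f'‖²)^{1/2}`. -/
theorem sobolev_inequality (a Δ : ℝ) (hΔ : 0 < Δ) (f f' : ℝ → ℂ)
    (hderiv : ∀ x ∈ Set.Icc a (a + Δ), HasDerivWithinAt f (f' x) (Set.Icc a (a + Δ)) x)
    (hcont : ContinuousOn f' (Set.Icc a (a + Δ))) :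
    ∀ u ∈ Set.Icc a (a + Δ),
      ‖f u‖ ^ 2 ≤ Δ⁻¹ * (∫ x in a..(a + Δ), ‖f x‖ ^ 2)
        + 2 * Real.sqrt (∫ x in a..(a + Δ), ‖f x‖ ^ 2)
            * Real.sqrt (∫ x in a..(a + Δ), ‖f' x‖ ^ 2) := by
  intro u hu
  have hab : a < a + Δ := lt_add_of_pos_right a hΔ
  have hCS := integral_norm_mul_norm_le_sqrt_mul_sqrt hab.le
    (HasDerivWithinAt.continuousOn hderiv) hcont
  have h := sq_norm_le_inv_mul_integral_add_two_mul_integral hab hderiv hcont hu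
  rw [add_sub_cancel_left] at h
  rw [mul_assoc 2]
  exact h.trans (by gcongr)
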